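/- Let a < b be real numbers and let φ : [a,b] → ℝ be any function of bounded variation with φ(a) = 0 and total variation V_a^b φ = 1. Let v(x) = V_a^x φ be the total variation function of φ, and let p = (v + φ)/2 and n = (v − φ)/2 be the positive and negative variation functions of φ. Then there exist a sequence (x_k)_{k≥1} of points of [a,b] and a sequence of signs (ε_k)_{k≥1} with each ε_k ∈ {−1, +1} such that for every x ∈ [a,b]: (a) (1/N)·Σ_{k=1}^N χ_{[a,x)}(x_k) → v(x); (b) (1/N)·Σ_{k=1}^N ε_k·χ_{[a,x)}(x_k) → φ(x); (c) (1/(2N))·Σ_{k=1}^N (1+ε_k)·χ_{[a,x)}(x_k) → p(x); and (d) (1/(2N))·Σ_{k=1}^N (1−ε_k)·χ_{[a,x)}(x_k) → n(x), as N → ∞. -/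
import Mathlib


open Filter Finset

namespace S19

noncomputable def qi (F : ℝ → ℝ) (a b t : ℝ) : ℝ := sInf {y | y ∈ Set.Icc a b ∧ t < F y}

noncomputable def qp (F : ℝ → ℝ) (a b η t : ℝ) : ℝ :=
  if t < F (qi F a b t) then max a (qi F a b t - η) else qi F a b t

variable {F : ℝ → ℝ} {a b η t x u : ℝ}

lemma qi_bdd : BddBelow {y | y ∈ Set.Icc a b ∧ t < F y} :=
  ⟨a, fun y hy => hy.1.1⟩

lemma qi_mem (hab : a ≤ b) (htb : t < F b) : qi F a b t ∈ Set.Icc a b := by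
  have hbS : b ∈ {y | y ∈ Set.Icc a b ∧ t < F y} := ⟨⟨hab, le_rfl⟩, htb⟩
  constructor
  · exact le_csInf ⟨b, hbS⟩ (fun y hy => hy.1.1)
  · exact csInf_le qi_bdd hbS

lemma qp_mem (hab : a ≤ b) (htb : t < F b) (hη : 0 ≤ η) : qp F a b η t ∈ Set.Icc a b := by
  have h := qi_mem (F := F) hab htb
  unfold qp
  split_ifs
  · exact ⟨le_max_left _ _, max_le hab (by linarith [h.2])⟩
  · exact h

lemma qp_lt (hF : MonotoneOn F (Set.Icc a b)) (hFa : F a = 0) (ht0 : 0 ≤ t)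
    (hx : x ∈ Set.Icc a b) (hη : 0 < η) (h : t < F x) : qp F a b η t < x := by
  have hgx : qi F a b t ≤ x := csInf_le qi_bdd ⟨hx, h⟩
  have hax : a < x := by
    rcases eq_or_lt_of_le hx.1 with rfl | h'
    · exfalso; rw [hFa] at h; linarith
    · exact h'
  unfold qp
  split_ifs with hcase
  · exact max_lt hax (by linarith)
  · rcases eq_or_lt_of_le hgx with heq | h'
    · exfalso; rw [heq] at hcase; exact hcase h
    · exact h'

lemma qp_cases (hab : a ≤ b) (hF : MonotoneOn F (Set.Icc a b))
    (hx : x ∈ Set.Icc a b) (hu : u ∈ Set.Icc a b) (htb : t < F b)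
    (hη : 0 < η) (hxη : x + η ≤ u) (hlt : qp F a b η t < x) :
    t < F x ∨ (∃ w ∈ Set.Icc a b, x < w ∧ F w ≤ t ∧ t < F u) := by
  by_cases hm : t < F x
  · exact Or.inl hm
  push_neg at hm
  right
  have hgI := qi_mem (F := F) hab htb
  have hbS : b ∈ {y | y ∈ Set.Icc a b ∧ t < F y} := ⟨⟨hab, le_rfl⟩, htb⟩
  unfold qp at hlt
  split_ifs at hlt with hcase
  · -- left-shift case
    have hgu : qi F a b t < u := by
      have : qi F a b t - η < x := lt_of_le_of_lt (le_max_right _ _) hlt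
      linarith
    have hxg : x < qi F a b t := by
      by_contra hle
      push_neg at hle
      exact absurd (lt_of_lt_of_le hcase (hF hgI hx hle)) (not_lt.2 hm)
    refine ⟨(x + qi F a b t) / 2, ⟨by linarith [hx.1], by linarith [hgI.2]⟩,
      by linarith, ?_, ?_⟩
    · have hw : (x + qi F a b t) / 2 < qi F a b t := by linarith
      have := notMem_of_lt_csInf hw (qi_bdd (F := F) (a := a) (b := b) (t := t))
      by_contra hc
      push_neg at hc
      exact this ⟨⟨by linarith [hx.1], by linarith [hgI.2]⟩, hc⟩
    · exact lt_of_lt_of_le hcase (hF hgI hu (by linarith))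
  · -- else case: contradiction
    exfalso
    obtain ⟨s, hs, hsx⟩ := (csInf_lt_iff qi_bdd ⟨b, hbS⟩).1 hlt
    exact absurd (lt_of_lt_of_le hs.2 (hF hs.1 hx hsx.le)) (not_lt.2 hm)

namespace S19

open Classical in
lemma countIcoUpper (m : ℕ) (r1 r2 : ℝ) (h0 : 0 ≤ r1) (h12 : r1 ≤ r2) :
    ∑ j ∈ range m, (if r1 ≤ (j : ℝ) ∧ (j : ℝ) < r2 then (1 : ℝ) else 0) ≤ r2 - r1 + 1 := by
  have h02 : 0 ≤ r2 := le_trans h0 h12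
  calc ∑ j ∈ range m, (if r1 ≤ (j : ℝ) ∧ (j : ℝ) < r2 then (1 : ℝ) else 0)
      = ((range m).filter (fun j : ℕ => r1 ≤ (j : ℝ) ∧ (j : ℝ) < r2)).card := by
        rw [Finset.sum_boole]
    _ ≤ ((Finset.Ico ⌈r1⌉₊ ⌈r2⌉₊).card : ℝ) := by
        have hsub : (range m).filter (fun j : ℕ => r1 ≤ (j : ℝ) ∧ (j : ℝ) < r2) ⊆
            Finset.Ico ⌈r1⌉₊ ⌈r2⌉₊ := by
          intro j hj
          simp only [Finset.mem_filter, Finset.mem_range] at hj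
          exact Finset.mem_Ico.2 ⟨Nat.ceil_le.2 hj.2.1, Nat.lt_ceil.2 hj.2.2⟩
        exact_mod_cast Finset.card_le_card hsub
    _ = ((⌈r2⌉₊ - ⌈r1⌉₊ : ℕ) : ℝ) := by rw [Nat.card_Ico]
    _ ≤ r2 - r1 + 1 := by
        rcases le_total ⌈r2⌉₊ ⌈r1⌉₊ with h | h
        · rw [Nat.sub_eq_zero_of_le h]; push_cast; linarith
        · rw [Nat.cast_sub h]
          have h1 := Nat.le_ceil r1
          have h2 := Nat.ceil_lt_add_one h02
          linarith

open Classical in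
lemma countIcoLower (m : ℕ) (r1 r2 : ℝ) (h0 : 0 ≤ r1) (h2 : r2 ≤ m) :
    r2 - r1 - 1 ≤ ∑ j ∈ range m, (if r1 ≤ (j : ℝ) ∧ (j : ℝ) < r2 then (1 : ℝ) else 0) := by
  calc r2 - r1 - 1
      ≤ ((⌈r2⌉₊ - ⌈r1⌉₊ : ℕ) : ℝ) := by
        rcases le_total ⌈r2⌉₊ ⌈r1⌉₊ with h | h
        · -- then r2 ≤ r1 + 1 roughly; RHS = 0
          rw [Nat.sub_eq_zero_of_le h]
          have h1 : (⌈r2⌉₊ : ℝ) ≤ (⌈r1⌉₊ : ℝ) := by exact_mod_cast h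
          have h2' := Nat.le_ceil r2
          have h3 := Nat.ceil_lt_add_one h0
          push_cast
          linarith
        · rw [Nat.cast_sub h]
          have h1 := Nat.le_ceil r2
          have h3 := Nat.ceil_lt_add_one h0
          linarith
    _ = ((Finset.Ico ⌈r1⌉₊ ⌈r2⌉₊).card : ℝ) := by rw [Nat.card_Ico]
    _ ≤ ∑ j ∈ range m, (if r1 ≤ (j : ℝ) ∧ (j : ℝ) < r2 then (1 : ℝ) else 0) := by
        rw [Finset.sum_boole]
        have hsub : Finset.Ico ⌈r1⌉₊ ⌈r2⌉₊ ⊆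
            (range m).filter (fun j : ℕ => r1 ≤ (j : ℝ) ∧ (j : ℝ) < r2) := by
          intro j hj
          rw [Finset.mem_Ico] at hj
          have hr1 : r1 ≤ (j : ℝ) := Nat.ceil_le.1 hj.1
          have hr2 : (j : ℝ) < r2 := Nat.lt_ceil.1 hj.2
          have hjm : j < m := by
            have : (j : ℝ) < (m : ℝ) := lt_of_lt_of_le hr2 h2
            exact_mod_cast this
          exact Finset.mem_filter.2 ⟨Finset.mem_range.2 hjm, hr1, hr2⟩
        exact_mod_cast Finset.card_le_card hsub


section Count

variable {F : ℝ → ℝ} {a b c x : ℝ}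

lemma count_lower (hab : a ≤ b) (hF : MonotoneOn F (Set.Icc a b)) (hFa : F a = 0)
    (hc : 0 ≤ c) (hcb : c + F b ≤ 1) (hx : x ∈ Set.Icc a b)
    (W : ℕ → ℕ → ℝ)
    (hW1 : ∀ m : ℕ, 1 ≤ m → ∀ j < m, c ≤ (j : ℝ)/m → (j : ℝ)/m < c + F b →
      W m j = Set.indicator (Set.Ico a x) (fun _ => (1 : ℝ)) (qp F a b (1/m) ((j : ℝ)/m - c)))
    (hWnn : ∀ m j, 0 ≤ W m j)
    (m : ℕ) (hm : 1 ≤ m) :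
    (m : ℝ) * F x - 1 ≤ ∑ j ∈ range m, W m j := by
  have hmpos : (0 : ℝ) < m := by exact_mod_cast hm
  have haI : a ∈ Set.Icc a b := ⟨le_rfl, hab⟩
  have hbI : b ∈ Set.Icc a b := ⟨hab, le_rfl⟩
  have hFx0 : 0 ≤ F x := by have := hF haI hx hx.1; rw [hFa] at this; exact this
  have hFxb : F x ≤ F b := hF hx hbI hx.2
  have step1 : ∑ j ∈ range m, (if (m : ℝ)*c ≤ (j : ℝ) ∧ (j : ℝ) < (m : ℝ)*(c + F x)
      then (1 : ℝ) else 0) ≤ ∑ j ∈ range m, W m j := by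
    apply Finset.sum_le_sum
    intro j hj
    have hjm : j < m := Finset.mem_range.1 hj
    split_ifs with hcond
    · have hj1 : c ≤ (j : ℝ)/m := by
        rw [le_div_iff₀ hmpos]; linarith [hcond.1, mul_comm c (m : ℝ)]
      have hj2 : (j : ℝ)/m < c + F x := by
        rw [div_lt_iff₀ hmpos]; linarith [hcond.2, mul_comm (c + F x) (m : ℝ)]
      have hj2' : (j : ℝ)/m < c + F b := lt_of_lt_of_le hj2 (by linarith)
      rw [hW1 m hm j hjm hj1 hj2']
      have ht0 : 0 ≤ (j : ℝ)/m - c := by linarith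
      have htx : (j : ℝ)/m - c < F x := by linarith
      have htb : (j : ℝ)/m - c < F b := by linarith
      have hη : (0 : ℝ) < 1/m := by positivity
      have hzx := qp_lt hF hFa ht0 hx hη htx
      have hza := (qp_mem hab htb hη.le).1
      have heq : (Set.Ico a x).indicator (fun _ => (1:ℝ)) (qp F a b (1/m) ((j : ℝ)/m - c)) = 1 :=
        Set.indicator_of_mem (Set.mem_Ico.2 ⟨hza, hzx⟩) (fun _ => 1)
      rw [heq]
    · exact hWnn m j
  have step2 := countIcoLower m ((m : ℝ)*c) ((m : ℝ)*(c + F x)) (by positivity)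
    (by nlinarith)
  nlinarith [step1, step2]

lemma count_upper (hab : a ≤ b) (hF : MonotoneOn F (Set.Icc a b)) (hFa : F a = 0)
    (hc : 0 ≤ c) (hcb : c + F b ≤ 1) (hx : x ∈ Set.Icc a b)
    (W : ℕ → ℕ → ℝ)
    (hW1 : ∀ m : ℕ, 1 ≤ m → ∀ j < m, c ≤ (j : ℝ)/m → (j : ℝ)/m < c + F b →
      W m j = Set.indicator (Set.Ico a x) (fun _ => (1 : ℝ)) (qp F a b (1/m) ((j : ℝ)/m - c)))
    (hW0 : ∀ m : ℕ, 1 ≤ m → ∀ j < m, ¬(c ≤ (j : ℝ)/m ∧ (j : ℝ)/m < c + F b) → W m j = 0)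
    (hWnn : ∀ m j, 0 ≤ W m j) (hWle : ∀ m j, W m j ≤ 1)
    {ε : ℝ} (hε : 0 < ε) :
    ∃ m₀ : ℕ, ∀ m ≥ m₀, ∑ j ∈ range m, W m j ≤ (m : ℝ) * (F x + ε) + 2 := by
  have haI : a ∈ Set.Icc a b := ⟨le_rfl, hab⟩
  have hbI : b ∈ Set.Icc a b := ⟨hab, le_rfl⟩
  have hFx0 : 0 ≤ F x := by have := hF haI hx hx.1; rw [hFa] at this; exact this
  have hFxb : F x ≤ F b := hF hx hbI hx.2
  rcases eq_or_lt_of_le hx.2 with hxb | hxb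
  · -- x = b : no mismatch possible
    refine ⟨1, fun m hm => ?_⟩
    have hmpos : (0 : ℝ) < m := by exact_mod_cast hm
    have step1 : ∑ j ∈ range m, W m j ≤ ∑ j ∈ range m,
        (if (m : ℝ)*c ≤ (j : ℝ) ∧ (j : ℝ) < (m : ℝ)*(c + F x) then (1 : ℝ) else 0) := by
      apply Finset.sum_le_sum
      intro j hj
      have hjm : j < m := Finset.mem_range.1 hj
      split_ifs with hcond
      · exact hWle m j
      · by_cases hcc : c ≤ (j : ℝ)/m ∧ (j : ℝ)/m < c + F b
        · exfalso
          apply hcond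
          constructor
          · have := (le_div_iff₀ hmpos).1 hcc.1; linarith [mul_comm c (m : ℝ)]
          · have h2 : (j : ℝ)/m < c + F x := by rw [← hxb] at hcc; exact hcc.2
            have := (div_lt_iff₀ hmpos).1 h2; linarith [mul_comm (c + F x) (m : ℝ)]
        · rw [hW0 m hm j hjm hcc]
    have step2 := countIcoUpper m ((m : ℝ)*c) ((m : ℝ)*(c + F x)) (by positivity)
      (by nlinarith)
    nlinarith [step1, step2]
  · -- x < b
    have hTne : (F '' {y | y ∈ Set.Icc a b ∧ x < y}).Nonempty := by
      apply Set.Nonempty.image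
      exact ⟨b, hbI, hxb⟩
    have hTbdd : BddBelow (F '' {y | y ∈ Set.Icc a b ∧ x < y}) := by
      refine ⟨0, ?_⟩
      rintro z ⟨y, hy, rfl⟩
      have := hF haI hy.1 hy.1.1
      rw [hFa] at this; exact this
    obtain ⟨z, hzT, hzlt⟩ := exists_lt_of_csInf_lt hTne
      (lt_add_of_pos_right (sInf (F '' {y | y ∈ Set.Icc a b ∧ x < y})) hε)
    obtain ⟨u₀, hu₀, rfl⟩ := hzT
    have hFu0 : 0 ≤ F u₀ := by
      have := hF haI hu₀.1 hu₀.1.1; rw [hFa] at this; exact this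
    obtain ⟨n₀, hn₀⟩ := exists_nat_one_div_lt (sub_pos.2 hu₀.2)
    refine ⟨n₀ + 1, fun m hm => ?_⟩
    have hm1 : 1 ≤ m := le_trans (by omega) hm
    have hmpos : (0 : ℝ) < m := by exact_mod_cast hm1
    have hηu : x + 1/m ≤ u₀ := by
      have h1 : (1 : ℝ)/m ≤ 1/(n₀ + 1) := by
        apply one_div_le_one_div_of_le (by positivity)
        exact_mod_cast hm
      have : (1 : ℝ)/(n₀+1) < u₀ - x := hn₀
      linarith
    have key : ∀ j ∈ range m, W m j ≤
        (if (m : ℝ)*c ≤ (j : ℝ) ∧ (j : ℝ) < (m : ℝ)*(c + F x) then (1 : ℝ) else 0)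
        + (if max 0 ((m : ℝ)*(c + F u₀ - ε)) ≤ (j : ℝ) ∧ (j : ℝ) < (m : ℝ)*(c + F u₀)
            then (1 : ℝ) else 0) := by
      intro j hj
      have hjm : j < m := Finset.mem_range.1 hj
      by_cases hcc : c ≤ (j : ℝ)/m ∧ (j : ℝ)/m < c + F b
      · rw [hW1 m hm1 j hjm hcc.1 hcc.2]
        by_cases hzq : qp F a b (1/m) ((j : ℝ)/m - c) ∈ Set.Ico a x
        · rw [Set.indicator_of_mem hzq]
          have htb : (j : ℝ)/m - c < F b := by linarith [hcc.2]
          have hη : (0 : ℝ) < 1/m := by positivity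
          rcases qp_cases hab hF hx hu₀.1 htb hη hηu hzq.2 with hlt | ⟨w, hw, hxw, hwt, htu⟩
          · have c1 : (m : ℝ)*c ≤ (j : ℝ) := by
              have := (le_div_iff₀ hmpos).1 hcc.1; linarith [mul_comm c (m : ℝ)]
            have c2 : (j : ℝ) < (m : ℝ)*(c + F x) := by
              have h2 : (j : ℝ)/m < c + F x := by linarith
              have := (div_lt_iff₀ hmpos).1 h2; linarith [mul_comm (c + F x) (m : ℝ)]
            rw [if_pos ⟨c1, c2⟩]
            have : (0:ℝ) ≤ (if max 0 ((m : ℝ)*(c + F u₀ - ε)) ≤ (j : ℝ) ∧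
                (j : ℝ) < (m : ℝ)*(c + F u₀) then (1 : ℝ) else 0) := by positivity
            linarith
          · have hIw : sInf (F '' {y | y ∈ Set.Icc a b ∧ x < y}) ≤ F w :=
              csInf_le hTbdd ⟨w, ⟨hw, hxw⟩, rfl⟩
            have h1 : F u₀ - ε < (j : ℝ)/m - c := by linarith
            have c1 : max 0 ((m : ℝ)*(c + F u₀ - ε)) ≤ (j : ℝ) := by
              apply max_le (by positivity)
              have h2 : c + F u₀ - ε < (j : ℝ)/m := by linarith
              have := (lt_div_iff₀ hmpos).1 h2
              linarith [mul_comm (c + F u₀ - ε) (m : ℝ)]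
            have c2 : (j : ℝ) < (m : ℝ)*(c + F u₀) := by
              have h2 : (j : ℝ)/m < c + F u₀ := by linarith
              have := (div_lt_iff₀ hmpos).1 h2; linarith [mul_comm (c + F u₀) (m : ℝ)]
            have e2 : (if max 0 ((m : ℝ)*(c + F u₀ - ε)) ≤ (j : ℝ) ∧
                (j : ℝ) < (m : ℝ)*(c + F u₀) then (1 : ℝ) else 0) = 1 := if_pos ⟨c1, c2⟩
            rw [e2]
            have : (0:ℝ) ≤ (if (m : ℝ)*c ≤ (j : ℝ) ∧ (j : ℝ) < (m : ℝ)*(c + F x)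
                then (1 : ℝ) else 0) := by positivity
            linarith
        · rw [Set.indicator_of_notMem hzq]
          positivity
      · rw [hW0 m hm1 j hjm hcc]
        positivity
    have step1 := Finset.sum_le_sum key
    rw [Finset.sum_add_distrib] at step1
    have step2 := countIcoUpper m ((m : ℝ)*c) ((m : ℝ)*(c + F x)) (by positivity)
      (by nlinarith)
    have step3 := countIcoUpper m (max 0 ((m : ℝ)*(c + F u₀ - ε))) ((m : ℝ)*(c + F u₀))
      (le_max_left _ _) (max_le (by positivity) (by nlinarith))
    have hmax : (m : ℝ)*(c + F u₀ - ε) ≤ max 0 ((m : ℝ)*(c + F u₀ - ε)) := le_max_right _ _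
    nlinarith [step1, step2, step3]

end Count


section Decode

def d : ℕ → ℕ × ℕ
  | 0 => (1, 0)
  | k+1 => if (d k).2 + 1 < (d k).1 then ((d k).1, (d k).2 + 1) else ((d k).1 + 1, 0)

lemma d_inv : ∀ k : ℕ, 0 < (d k).1 ∧ (d k).2 < (d k).1 ∧
    k = ∑ m ∈ range (d k).1, m + (d k).2 := by
  intro k
  induction k with
  | zero => simp [d]
  | succ k ih =>
    obtain ⟨h1, h2, h3⟩ := ih
    by_cases h : (d k).2 + 1 < (d k).1
    · have hd : d (k+1) = ((d k).1, (d k).2 + 1) := by rw [d, if_pos h]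
      rw [hd]
      refine ⟨h1, h, ?_⟩
      show k + 1 = ∑ m ∈ range (d k).1, m + ((d k).2 + 1)
      omega
    · have hd : d (k+1) = ((d k).1 + 1, 0) := by rw [d, if_neg h]
      rw [hd]
      refine ⟨by omega, by omega, ?_⟩
      simp only
      rw [Finset.sum_range_succ]
      omega

lemma d_sum (W : ℕ → ℕ → ℝ) (N : ℕ) :
    ∑ k ∈ range N, W (d k).1 (d k).2 =
      ∑ m ∈ range (d N).1, ∑ j ∈ range m, W m j + ∑ j ∈ range (d N).2, W (d N).1 j := by
  induction N with
  | zero => simp [d]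
  | succ N ih =>
    rw [Finset.sum_range_succ, ih]
    by_cases h : (d N).2 + 1 < (d N).1
    · have hd : d (N+1) = ((d N).1, (d N).2 + 1) := by rw [d, if_pos h]
      rw [hd]
      simp only
      rw [Finset.sum_range_succ]
      ring
    · have he : (d N).2 + 1 = (d N).1 := by
        have := (d_inv N).2.1; omega
      have hd : d (N+1) = ((d N).1 + 1, 0) := by rw [d, if_neg h]
      rw [hd]
      show _ = ∑ m ∈ range ((d N).1 + 1), ∑ j ∈ range m, W m j + ∑ j ∈ range 0, W ((d N).1 + 1) j
      rw [Finset.sum_range_zero, add_zero]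
      conv_rhs => rw [Finset.sum_range_succ]
      have h2 : ∑ j ∈ range (d N).1, W (d N).1 j = ∑ j ∈ range ((d N).2 + 1), W (d N).1 j := by
        rw [he]
      rw [h2, Finset.sum_range_succ]
      ring

lemma d_ge (N : ℕ) : ((d N).1 : ℝ) * ((d N).1 - 1) ≤ 2 * N := by
  obtain ⟨h1, h2, h3⟩ := d_inv N
  have hs := Finset.sum_range_id_mul_two (d N).1
  have hc : ((∑ m ∈ range (d N).1, m : ℕ) : ℝ) * 2 = ((d N).1 : ℝ) * (((d N).1 - 1 : ℕ) : ℝ) := by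
    exact_mod_cast congrArg (Nat.cast : ℕ → ℝ) hs
  rw [Nat.cast_sub h1] at hc
  norm_num at hc
  have hc2 : ((∑ m ∈ range (d N).1, m : ℕ) : ℝ) ≤ N := by
    have : (∑ m ∈ range (d N).1, m) ≤ N := by omega
    exact_mod_cast this
  push_cast at hc2
  linarith

lemma d_lt (N : ℕ) : (N : ℝ) < ((d N).1 : ℝ) * (d N).1 := by
  obtain ⟨h1, h2, h3⟩ := d_inv N
  have hs := Finset.sum_range_id_mul_two (d N).1
  have hc : ((∑ m ∈ range (d N).1, m : ℕ) : ℝ) * 2 = ((d N).1 : ℝ) * (((d N).1 - 1 : ℕ) : ℝ) := by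
    exact_mod_cast congrArg (Nat.cast : ℕ → ℝ) hs
  rw [Nat.cast_sub h1] at hc
  norm_num at hc
  have hr : ((d N).2 : ℝ) ≤ ((d N).1 : ℝ) - 1 := by
    have : (d N).2 + 1 ≤ (d N).1 := h2
    have := (Nat.cast_le (α := ℝ)).2 this
    push_cast at this; linarith
  have hM1 : (1 : ℝ) ≤ ((d N).1 : ℝ) := by exact_mod_cast h1
  have hNc : (N : ℝ) = ((∑ m ∈ range (d N).1, m : ℕ) : ℝ) + ((d N).2 : ℝ) := by
    exact_mod_cast congrArg (Nat.cast : ℕ → ℝ) h3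
  push_cast at hNc
  have hMM : ((d N).1 : ℝ) ≤ ((d N).1 : ℝ) * (d N).1 := by nlinarith [hM1]
  linarith

lemma d_big (K N : ℕ) (h : K * K ≤ N) : K ≤ (d N).1 := by
  by_contra h'
  push_neg at h'
  have h2 : (d N).1 * (d N).1 ≤ K * K := Nat.mul_le_mul h'.le h'.le
  have h3 : (N : ℝ) < K * K := lt_of_lt_of_le (d_lt N) (by exact_mod_cast h2)
  have : (K * K : ℝ) ≤ N := by exact_mod_cast h
  linarith

lemma d_tendsto : Tendsto (fun N => (d N).1) atTop atTop :=
  tendsto_atTop_atTop.2 fun K => ⟨K * K, fun N hN => d_big K N hN⟩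

lemma d_div_tendsto : Tendsto (fun N : ℕ => ((d N).1 : ℝ)/N) atTop (nhds 0) := by
  have hinner : Tendsto (fun N : ℕ => ((d N).1 : ℝ) - 1) atTop atTop := by
    apply tendsto_atTop_add_const_right
    exact tendsto_natCast_atTop_atTop.comp d_tendsto
  have hub : Tendsto (fun N : ℕ => 2 / (((d N).1 : ℝ) - 1)) atTop (nhds 0) :=
    Tendsto.div_atTop tendsto_const_nhds hinner
  apply tendsto_of_tendsto_of_tendsto_of_le_of_le' tendsto_const_nhds hub
  · filter_upwards [eventually_ge_atTop 1] with N hN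
    positivity
  · filter_upwards [eventually_ge_atTop 4] with N hN
    have hM2 : 2 ≤ (d N).1 := d_big 2 N hN
    have hM2' : (2 : ℝ) ≤ ((d N).1 : ℝ) := by exact_mod_cast hM2
    have hN0 : (0 : ℝ) < N := by positivity
    rw [div_le_div_iff₀ hN0 (by linarith)]
    have := d_ge N
    linarith

end Decode

section Cesaro

lemma cesaro (W : ℕ → ℕ → ℝ) (L : ℝ) (hL0 : 0 ≤ L) (hL1 : L ≤ 1)
    (hWnn : ∀ m j, 0 ≤ W m j) (hWle : ∀ m j, W m j ≤ 1)
    (hlow : ∀ m : ℕ, (m : ℝ) * L - 1 ≤ ∑ j ∈ range m, W m j)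
    (hup : ∀ ε : ℝ, 0 < ε → ∃ m₀ : ℕ, ∀ m ≥ m₀,
      ∑ j ∈ range m, W m j ≤ (m : ℝ) * (L + ε) + 2) :
    Tendsto (fun N : ℕ => (N : ℝ)⁻¹ * ∑ k ∈ range N, W (d k).1 (d k).2) atTop (nhds L) := by
  rw [tendsto_order]
  constructor
  · -- lower bounds
    intro l hl
    have hlo : Tendsto (fun N : ℕ => L - 2 * (((d N).1 : ℝ)/N)) atTop (nhds L) := by
      have := tendsto_const_nhds (x := L) (f := atTop (α := ℕ)).sub
        ((d_div_tendsto).const_mul 2)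
      simpa using this
    filter_upwards [hlo.eventually (eventually_gt_nhds hl), eventually_ge_atTop 1] with N hN hN1
    refine lt_of_lt_of_le hN ?_
    -- show L - 2 * (M/N) ≤ N⁻¹ * S
    have hN0 : (0 : ℝ) < N := by exact_mod_cast hN1
    obtain ⟨h1, h2, h3⟩ := d_inv N
    set M := (d N).1 with hM
    set r := (d N).2 with hr
    have hsum := d_sum W N
    have hρ : (0 : ℝ) ≤ ∑ j ∈ range r, W M j :=
      Finset.sum_nonneg fun j _ => hWnn M j
    have hblocks : L * (∑ m ∈ range M, (m : ℝ)) - M ≤ ∑ m ∈ range M, ∑ j ∈ range m, W m j := by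
      have : ∀ m ∈ range M, (m : ℝ) * L - 1 ≤ ∑ j ∈ range m, W m j := fun m _ => hlow m
      have h' := Finset.sum_le_sum this
      rw [Finset.sum_sub_distrib] at h'
      simp only [Finset.sum_const, Finset.card_range, nsmul_eq_mul, mul_one] at h'
      have hms : L * (∑ m ∈ range M, (m : ℝ)) = ∑ m ∈ range M, ((m : ℝ) * L) := by
        rw [Finset.mul_sum]
        exact Finset.sum_congr rfl fun m _ => mul_comm _ _
      linarith [h', le_of_eq hms]
    have hsm : (N : ℝ) - M ≤ ∑ m ∈ range M, (m : ℝ) := by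
      have : (∑ m ∈ range M, (m:ℕ) : ℕ) = N - r := by omega
      have hcast : (∑ m ∈ range M, (m : ℝ)) = ((∑ m ∈ range M, m : ℕ) : ℝ) := by push_cast; rfl
      rw [hcast, this]
      have hrM : (r : ℝ) ≤ (M : ℝ) := by exact_mod_cast h2.le
      have : ((N - r : ℕ) : ℝ) = (N : ℝ) - r := by
        rw [Nat.cast_sub]; omega
      rw [this]; linarith
    have hS : L * N - 2 * M ≤ ∑ k ∈ range N, W (d k).1 (d k).2 := by
      rw [hsum]
      have hLM : L * (M : ℝ) ≤ M := by nlinarith [(by positivity : (0:ℝ) ≤ (M : ℝ))]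
      nlinarith [hblocks, hsm, hρ]
    rw [inv_mul_eq_div, le_div_iff₀ hN0]
    have hexp : (L - 2 * ((M : ℝ)/N)) * N = L * N - 2 * M := by
      field_simp
    rw [hexp]
    exact hS
  · -- upper bounds
    intro u hu
    obtain ⟨m₀, hm₀⟩ := hup ((u - L)/2) (by linarith)
    have hhi : Tendsto (fun N : ℕ => L + (u - L)/2 + (3 * (((d N).1 : ℝ)/N)
        + (m₀ * m₀ : ℝ)/N)) atTop (nhds (L + (u - L)/2)) := by
      have t1 : Tendsto (fun N : ℕ => (m₀ * m₀ : ℝ)/N) atTop (nhds 0) :=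
        tendsto_const_div_atTop_nhds_zero_nat _
      have t2 := (d_div_tendsto.const_mul 3).add t1
      have t3 := (tendsto_const_nhds (x := L + (u - L)/2) (f := atTop (α := ℕ))).add t2
      simpa using t3
    have hlim : L + (u - L)/2 < u := by linarith
    filter_upwards [hhi.eventually (eventually_lt_nhds hlim), eventually_ge_atTop 1]
      with N hN hN1
    refine lt_of_le_of_lt ?_ hN
    have hN0 : (0 : ℝ) < N := by exact_mod_cast hN1
    obtain ⟨h1, h2, h3⟩ := d_inv N
    set M := (d N).1 with hM
    set r := (d N).2 with hr
    have hsum := d_sum W N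
    have hρ : (∑ j ∈ range r, W M j) ≤ (M : ℝ) := by
      calc (∑ j ∈ range r, W M j) ≤ ∑ j ∈ range r, 1 :=
            Finset.sum_le_sum fun j _ => hWle M j
        _ = (r : ℝ) := by simp
        _ ≤ (M : ℝ) := by exact_mod_cast h2.le
    have hε' : (0 : ℝ) < (u - L)/2 := by linarith
    have hblocks : ∑ m ∈ range M, ∑ j ∈ range m, W m j ≤
        (L + (u - L)/2) * (∑ m ∈ range M, (m : ℝ)) + 2 * M + m₀ * m₀ := by
      have hterm : ∀ m ∈ range M, ∑ j ∈ range m, W m j ≤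
          ((m : ℝ) * (L + (u - L)/2) + 2) + (if m < m₀ then (m₀ : ℝ) else 0) := by
        intro m _
        by_cases hmm : m₀ ≤ m
        · rw [if_neg (by omega)]
          simpa using hm₀ m hmm
        · rw [if_pos (by omega)]
          have hA : ∑ j ∈ range m, W m j ≤ (m : ℝ) := by
            calc ∑ j ∈ range m, W m j ≤ ∑ j ∈ range m, 1 :=
                  Finset.sum_le_sum fun j _ => hWle m j
              _ = (m : ℝ) := by simp
          have hmε : (0 : ℝ) ≤ (m : ℝ) * (L + (u - L)/2) := by positivity
          have hm0 : (m : ℝ) ≤ (m₀ : ℝ) := by exact_mod_cast (by omega : m ≤ m₀)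
          linarith
      have h' := Finset.sum_le_sum hterm
      rw [Finset.sum_add_distrib] at h'
      have hpad : ∑ m ∈ range M, (if m < m₀ then (m₀ : ℝ) else 0) ≤ m₀ * m₀ := by
        classical
        rw [← Finset.sum_filter]
        have hcard : ((range M).filter (fun m => m < m₀)).card ≤ m₀ := by
          have : (range M).filter (fun m => m < m₀) ⊆ range m₀ := by
            intro m hm
            simp only [Finset.mem_filter] at hm
            exact Finset.mem_range.2 hm.2
          simpa using Finset.card_le_card this
        rw [Finset.sum_const, nsmul_eq_mul]
        have : (((range M).filter (fun m => m < m₀)).card : ℝ) ≤ (m₀ : ℝ) := by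
          exact_mod_cast hcard
        nlinarith [this, (by positivity : (0:ℝ) ≤ (m₀ : ℝ))]
      have hlin : ∑ m ∈ range M, ((m : ℝ) * (L + (u - L)/2) + 2) =
          (L + (u - L)/2) * (∑ m ∈ range M, (m : ℝ)) + 2 * M := by
        rw [Finset.sum_add_distrib, Finset.sum_const, Finset.card_range, nsmul_eq_mul,
          Finset.mul_sum]
        congr 1
        · exact Finset.sum_congr rfl fun m _ => mul_comm _ _
        · ring
      rw [hlin] at h'
      linarith
    have hsm : (∑ m ∈ range M, (m : ℝ)) ≤ N := by
      have hle : (∑ m ∈ range M, m : ℕ) ≤ N := by omega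
      have hcast : (∑ m ∈ range M, (m : ℝ)) = ((∑ m ∈ range M, m : ℕ) : ℝ) := by push_cast; rfl
      rw [hcast]; exact_mod_cast hle
    have hS : ∑ k ∈ range N, W (d k).1 (d k).2 ≤
        (L + (u - L)/2) * N + 3 * M + m₀ * m₀ := by
      rw [hsum]
      have hc : (0 : ℝ) ≤ L + (u - L)/2 := by linarith
      nlinarith [hblocks, hρ, hsm]
    rw [inv_mul_eq_div, div_le_iff₀ hN0]
    have hexp : (L + (u - L)/2 + (3 * ((M : ℝ)/N) + (m₀ * m₀ : ℝ)/N)) * N =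
        (L + (u - L)/2) * N + 3 * M + m₀ * m₀ := by
      field_simp
      ring
    rw [hexp]
    exact hS

end Cesaro

end S19

end S19


open S19 S19.S19 in
/-- Let `φ : [a,b] → ℝ` be any function of bounded
variation with `φ a = 0` and total variation `V_a^b φ = 1`.  Let
`v x = V_a^x φ` and `p = (v + φ)/2`, `n = (v - φ)/2`.  Then there are a
sequence `(x_k) ⊆ [a,b]` and signs `(ε_k) ⊆ {±1}` such that for every
`x ∈ [a,b]` the limit relations (a)–(d) hold. -/
theorem stmt19 (a b : ℝ) (hab : a < b) (φ : ℝ → ℝ)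
    (hBV : BoundedVariationOn φ (Set.Icc a b))
    (hφa : φ a = 0) (hV : variationOnFromTo φ (Set.Icc a b) a b = 1) :
    ∃ (xs : ℕ → ℝ) (ε : ℕ → ℝ), (∀ k, xs k ∈ Set.Icc a b) ∧
      (∀ k, ε k = 1 ∨ ε k = -1) ∧
      ∀ x ∈ Set.Icc a b,
        (Tendsto (fun N : ℕ => (N : ℝ)⁻¹ *
            ∑ k ∈ Finset.range N, Set.indicator (Set.Ico a x) (fun _ => (1 : ℝ)) (xs k))
          atTop (nhds (variationOnFromTo φ (Set.Icc a b) a x))) ∧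
        (Tendsto (fun N : ℕ => (N : ℝ)⁻¹ *
            ∑ k ∈ Finset.range N, ε k * Set.indicator (Set.Ico a x) (fun _ => (1 : ℝ)) (xs k))
          atTop (nhds (φ x))) ∧
        (Tendsto (fun N : ℕ => (2 * N : ℝ)⁻¹ *
            ∑ k ∈ Finset.range N, (1 + ε k) * Set.indicator (Set.Ico a x) (fun _ => (1 : ℝ)) (xs k))
          atTop (nhds ((variationOnFromTo φ (Set.Icc a b) a x + φ x) / 2))) ∧
        (Tendsto (fun N : ℕ => (2 * N : ℝ)⁻¹ *
            ∑ k ∈ Finset.range N, (1 - ε k) * Set.indicator (Set.Ico a x) (fun _ => (1 : ℝ)) (xs k))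
          atTop (nhds ((variationOnFromTo φ (Set.Icc a b) a x - φ x) / 2))) := by
  classical
  have habl : a ≤ b := hab.le
  have haI : a ∈ Set.Icc a b := ⟨le_rfl, habl⟩
  have hbI : b ∈ Set.Icc a b := ⟨habl, le_rfl⟩
  have hloc : LocallyBoundedVariationOn φ (Set.Icc a b) := hBV.locallyBoundedVariationOn
  have hdist : ∀ x ∈ Set.Icc a b, ∀ y ∈ Set.Icc a b, x ≤ y →
      |φ y - φ x| ≤ variationOnFromTo φ (Set.Icc a b) a y
        - variationOnFromTo φ (Set.Icc a b) a x := by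
    intro x hx y hy hxy
    have hvar : |φ y - φ x| ≤ variationOnFromTo φ (Set.Icc a b) x y := by
      rw [variationOnFromTo.eq_of_le φ (Set.Icc a b) hxy]
      have h1 : edist (φ x) (φ y) ≤ eVariationOn φ (Set.Icc a b ∩ Set.Icc x y) :=
        eVariationOn.edist_le φ ⟨hx, le_rfl, hxy⟩ ⟨hy, hxy, le_rfl⟩
      have h2 := ENNReal.toReal_mono (hloc x y hx hy) h1
      calc |φ y - φ x| = dist (φ y) (φ x) := (Real.dist_eq _ _).symm
        _ = dist (φ x) (φ y) := dist_comm _ _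
        _ = (edist (φ x) (φ y)).toReal := dist_edist _ _
        _ ≤ _ := h2
    have hadd := variationOnFromTo.add hloc haI hx hy
    linarith
  set P : ℝ → ℝ := fun y => (variationOnFromTo φ (Set.Icc a b) a y + φ y)/2 with hP
  set Q : ℝ → ℝ := fun y => (variationOnFromTo φ (Set.Icc a b) a y - φ y)/2 with hQ
  have hva : variationOnFromTo φ (Set.Icc a b) a a = 0 := variationOnFromTo.self φ _ a
  have hPa : P a = 0 := by simp [hP, hva, hφa]
  have hQa : Q a = 0 := by simp [hQ, hva, hφa]
  have hPmono : MonotoneOn P (Set.Icc a b) := by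
    intro x hx y hy hxy
    have h2 := abs_le.1 (hdist x hx y hy hxy)
    simp only [hP]
    linarith [h2.1]
  have hQmono : MonotoneOn Q (Set.Icc a b) := by
    intro x hx y hy hxy
    have h2 := abs_le.1 (hdist x hx y hy hxy)
    simp only [hQ]
    linarith [h2.2]
  have hPQb : P b + Q b = 1 := by
    simp only [hP, hQ]
    linarith [hV]
  have hPb0 : 0 ≤ P b := by
    have := hPmono haI hbI habl; rw [hPa] at this; exact this
  have hQb0 : 0 ≤ Q b := by
    have := hQmono haI hbI habl; rw [hQa] at this; exact this
  have hPb1 : P b ≤ 1 := by linarith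
  have hQb1 : Q b ≤ 1 := by linarith
  set xs0 : ℕ → ℝ := fun k => if ((d k).2 : ℝ)/((d k).1 : ℝ) < P b
      then qp P a b (1/((d k).1 : ℝ)) (((d k).2 : ℝ)/((d k).1 : ℝ))
      else qp Q a b (1/((d k).1 : ℝ)) (((d k).2 : ℝ)/((d k).1 : ℝ) - P b) with hxs0
  set eps0 : ℕ → ℝ := fun k => if ((d k).2 : ℝ)/((d k).1 : ℝ) < P b then 1 else -1 with heps0
  refine ⟨xs0, eps0, ?_, ?_, ?_⟩
  · -- membership
    intro k
    obtain ⟨h1, h2, _⟩ := d_inv k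
    have hmpos : (0 : ℝ) < ((d k).1 : ℝ) := by exact_mod_cast h1
    have hjm : ((d k).2 : ℝ)/((d k).1 : ℝ) < 1 := by
      rw [div_lt_one hmpos]; exact_mod_cast h2
    have hjm0 : (0 : ℝ) ≤ ((d k).2 : ℝ)/((d k).1 : ℝ) := by positivity
    simp only [hxs0]
    split_ifs with hbr
    · exact qp_mem habl hbr (by positivity)
    · push_neg at hbr
      have hlt : ((d k).2 : ℝ)/((d k).1 : ℝ) - P b < Q b := by linarith
      exact qp_mem habl hlt (by positivity)
  · -- signs
    intro k
    simp only [heps0]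
    split_ifs
    · exact Or.inl rfl
    · exact Or.inr rfl
  · -- the four limits
    intro x hx
    have hPx0 : 0 ≤ P x := by
      have := hPmono haI hx hx.1; rw [hPa] at this; exact this
    have hQx0 : 0 ≤ Q x := by
      have := hQmono haI hx hx.1; rw [hQa] at this; exact this
    have hPxb : P x ≤ P b := hPmono hx hbI hx.2
    have hQxb : Q x ≤ Q b := hQmono hx hbI hx.2
    set Wp : ℕ → ℕ → ℝ := fun m j => if ((j : ℝ)/(m : ℝ) < P b)
      then Set.indicator (Set.Ico a x) (fun _ => (1 : ℝ)) (qp P a b (1/(m : ℝ)) ((j : ℝ)/(m : ℝ)))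
      else 0 with hWp
    set Wq : ℕ → ℕ → ℝ := fun m j => if ((j : ℝ)/(m : ℝ) < P b)
      then 0
      else Set.indicator (Set.Ico a x) (fun _ => (1 : ℝ))
        (qp Q a b (1/(m : ℝ)) ((j : ℝ)/(m : ℝ) - P b)) with hWq
    have hind01 : ∀ z : ℝ, 0 ≤ Set.indicator (Set.Ico a x) (fun _ => (1 : ℝ)) z ∧
        Set.indicator (Set.Ico a x) (fun _ => (1 : ℝ)) z ≤ 1 := by
      intro z
      by_cases hz : z ∈ Set.Ico a x
      · rw [Set.indicator_of_mem hz]; norm_num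
      · rw [Set.indicator_of_notMem hz]; norm_num
    have hWpnn : ∀ m j, 0 ≤ Wp m j := by
      intro m j; simp only [hWp]; split_ifs
      · exact (hind01 _).1
      · exact le_refl 0
    have hWple : ∀ m j, Wp m j ≤ 1 := by
      intro m j; simp only [hWp]; split_ifs
      · exact (hind01 _).2
      · norm_num
    have hWqnn : ∀ m j, 0 ≤ Wq m j := by
      intro m j; simp only [hWq]; split_ifs
      · exact le_refl 0
      · exact (hind01 _).1
    have hWqle : ∀ m j, Wq m j ≤ 1 := by
      intro m j; simp only [hWq]; split_ifs
      · norm_num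
      · exact (hind01 _).2
    have hWp1 : ∀ m : ℕ, 1 ≤ m → ∀ j < m, (0:ℝ) ≤ (j : ℝ)/(m : ℝ) →
        (j : ℝ)/(m : ℝ) < 0 + P b →
        Wp m j = Set.indicator (Set.Ico a x) (fun _ => (1 : ℝ))
          (qp P a b (1/(m : ℝ)) ((j : ℝ)/(m : ℝ) - 0)) := by
      intro m _ j _ _ hcond
      rw [zero_add] at hcond
      simp only [hWp]
      rw [if_pos hcond, sub_zero]
    have hWp0 : ∀ m : ℕ, 1 ≤ m → ∀ j < m,
        ¬((0:ℝ) ≤ (j : ℝ)/(m : ℝ) ∧ (j : ℝ)/(m : ℝ) < 0 + P b) → Wp m j = 0 := by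
      intro m hm j _ hcond
      have hmpos : (0:ℝ) < (m : ℝ) := by exact_mod_cast hm
      have h0 : (0:ℝ) ≤ (j : ℝ)/(m : ℝ) := by positivity
      have hnot : ¬((j : ℝ)/(m : ℝ) < P b) := by
        intro hlt; exact hcond ⟨h0, by rwa [zero_add]⟩
      simp only [hWp]
      rw [if_neg hnot]
    have hWq1 : ∀ m : ℕ, 1 ≤ m → ∀ j < m, P b ≤ (j : ℝ)/(m : ℝ) →
        (j : ℝ)/(m : ℝ) < P b + Q b →
        Wq m j = Set.indicator (Set.Ico a x) (fun _ => (1 : ℝ))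
          (qp Q a b (1/(m : ℝ)) ((j : ℝ)/(m : ℝ) - P b)) := by
      intro m _ j _ hc1 _
      simp only [hWq]
      rw [if_neg (not_lt.2 hc1)]
    have hWq0 : ∀ m : ℕ, 1 ≤ m → ∀ j < m,
        ¬(P b ≤ (j : ℝ)/(m : ℝ) ∧ (j : ℝ)/(m : ℝ) < P b + Q b) → Wq m j = 0 := by
      intro m hm j hjm hcond
      have hmpos : (0:ℝ) < (m : ℝ) := by exact_mod_cast hm
      by_cases hbr : (j : ℝ)/(m : ℝ) < P b
      · simp only [hWq]; rw [if_pos hbr]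
      · exfalso
        push_neg at hbr
        apply hcond
        refine ⟨hbr, ?_⟩
        have hlt1 : (j : ℝ)/(m : ℝ) < 1 := by
          rw [div_lt_one hmpos]; exact_mod_cast hjm
        linarith
    have hTp : Tendsto (fun N : ℕ => (N : ℝ)⁻¹ * ∑ k ∈ range N, Wp (d k).1 (d k).2)
        atTop (nhds (P x)) := by
      apply cesaro Wp (P x) hPx0 (by linarith) hWpnn hWple
      · intro m
        rcases Nat.eq_zero_or_pos m with rfl | hm
        · norm_num
        · exact count_lower habl hPmono hPa le_rfl (by rw [zero_add]; exact hPb1) hx Wp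
            hWp1 hWpnn m hm
      · intro ε hε
        exact count_upper habl hPmono hPa le_rfl (by rw [zero_add]; exact hPb1) hx Wp
          hWp1 hWp0 hWpnn hWple hε
    have hTq : Tendsto (fun N : ℕ => (N : ℝ)⁻¹ * ∑ k ∈ range N, Wq (d k).1 (d k).2)
        atTop (nhds (Q x)) := by
      apply cesaro Wq (Q x) hQx0 (by linarith) hWqnn hWqle
      · intro m
        rcases Nat.eq_zero_or_pos m with rfl | hm
        · norm_num
        · exact count_lower habl hQmono hQa hPb0 (by linarith) hx Wq hWq1 hWqnn m hm
      · intro ε hε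
        exact count_upper habl hQmono hQa hPb0 (by linarith) hx Wq hWq1 hWq0 hWqnn hWqle hε
    have hkey : ∀ k : ℕ,
        Wp (d k).1 (d k).2 =
          (1 + eps0 k)/2 * Set.indicator (Set.Ico a x) (fun _ => (1:ℝ)) (xs0 k) ∧
        Wq (d k).1 (d k).2 =
          (1 - eps0 k)/2 * Set.indicator (Set.Ico a x) (fun _ => (1:ℝ)) (xs0 k) := by
      intro k
      by_cases hbr : ((d k).2 : ℝ)/((d k).1 : ℝ) < P b
      · simp only [hWp, hWq, hxs0, heps0]
        rw [if_pos hbr, if_pos hbr, if_pos hbr, if_pos hbr]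
        constructor <;> ring
      · simp only [hWp, hWq, hxs0, heps0]
        rw [if_neg hbr, if_neg hbr, if_neg hbr, if_neg hbr]
        constructor <;> ring
    refine ⟨?_, ?_, ?_, ?_⟩
    · -- (a)
      have hval : P x + Q x = variationOnFromTo φ (Set.Icc a b) a x := by
        simp only [hP, hQ]; ring
      have h := hTp.add hTq
      rw [hval] at h
      refine h.congr fun N => ?_
      rw [← mul_add, ← Finset.sum_add_distrib]
      congr 1
      refine Finset.sum_congr rfl fun k _ => ?_
      rw [(hkey k).1, (hkey k).2]
      ring
    · -- (b)
      have hval : P x - Q x = φ x := by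
        simp only [hP, hQ]; ring
      have h := hTp.sub hTq
      rw [hval] at h
      refine h.congr fun N => ?_
      rw [← mul_sub, ← Finset.sum_sub_distrib]
      congr 1
      refine Finset.sum_congr rfl fun k _ => ?_
      rw [(hkey k).1, (hkey k).2]
      ring
    · -- (c)
      have hval : P x = (variationOnFromTo φ (Set.Icc a b) a x + φ x)/2 := by
        rw [hP]
      rw [← hval]
      refine hTp.congr fun N => ?_
      have hsum : ∑ k ∈ range N, (1 + eps0 k) *
          Set.indicator (Set.Ico a x) (fun _ => (1:ℝ)) (xs0 k) =
          ∑ k ∈ range N, 2 * Wp (d k).1 (d k).2 := by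
        refine Finset.sum_congr rfl fun k _ => ?_
        rw [(hkey k).1]
        ring
      rw [hsum, ← Finset.mul_sum, mul_inv]
      ring
    · -- (d)
      have hval : Q x = (variationOnFromTo φ (Set.Icc a b) a x - φ x)/2 := by
        rw [hQ]
      rw [← hval]
      refine hTq.congr fun N => ?_
      have hsum : ∑ k ∈ range N, (1 - eps0 k) *
          Set.indicator (Set.Ico a x) (fun _ => (1:ℝ)) (xs0 k) =
          ∑ k ∈ range N, 2 * Wq (d k).1 (d k).2 := by
        refine Finset.sum_congr rfl fun k _ => ?_
        rw [(hkey k).2]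
        ring
      rw [hsum, ← Finset.mul_sum, mul_inv]
      ring
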